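/- Let d > 0 and θ_d ∈ (0,π) satisfy sin(θ_d/2) = d/(1+d). Then the function f(θ) = (1+d)·√(sin²(θ/2) - sin²(θ_d/2)) / (2π·sin(θ/2)), defined for θ ∈ (θ_d, 2π - θ_d), integrates to 1 over (θ_d, 2π - θ_d); i.e. the Hua-Pickrell equilibrium measure HP_d is a probability measure. -/

import Mathlib

/-!
On `(θd, 2π - θd)` the integrand `√(sin² (θ/2) - s²) / sin (θ/2)`, `s = sin (θd/2)`,
`c = cos (θd/2)`, has the elementary antiderivative
`F θ = 2 s · arcsin (s cos (θ/2) / (c sin (θ/2))) - 2 arcsin (cos (θ/2) / c)`,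
which extends continuously to the endpoints: there both arguments of `arcsin` equal `1`
(at `θd`) and `-1` (at `2π - θd`), so the integral is `F (2π - θd) - F θd = 2π (1 - s)`.
With `s = d / (1 + d)` this is `2π / (1 + d)`, exactly cancelling the normalisation.
-/

open Real Set intervalIntegral

lemma HasDerivAt.arcsin_of_sq_lt_one {f : ℝ → ℝ} {f' x : ℝ} (hf : HasDerivAt f f' x)
    (h : f x ^ 2 < 1) : HasDerivAt (fun y => arcsin (f y)) (f' / √(1 - f x ^ 2)) x := by
  have h₁ : f x ≠ -1 := by rintro h'; rw [h'] at h; norm_num at h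
  have h₂ : f x ≠ 1 := by rintro h'; rw [h'] at h; norm_num at h
  rw [div_eq_inv_mul, ← one_div]
  exact (hasDerivAt_arcsin h₁ h₂).comp x hf

lemma sin_le_sin_of_le_of_le_pi_sub {a x : ℝ} (ha : 0 ≤ a) (h₁ : a ≤ x) (h₂ : x ≤ π - a) :
    sin a ≤ sin x := by
  have hsin : 0 ≤ sin ((x - a) / 2) := sin_nonneg_of_nonneg_of_le_pi (by linarith) (by linarith)
  have hcos : 0 ≤ cos ((x + a) / 2) := cos_nonneg_of_mem_Icc ⟨by linarith, by linarith⟩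
  nlinarith [sin_sub_sin x a, mul_nonneg hsin hcos]

lemma sin_lt_sin_of_lt_of_lt_pi_sub {a x : ℝ} (ha : 0 ≤ a) (h₁ : a < x) (h₂ : x < π - a) :
    sin a < sin x := by
  have hsin : 0 < sin ((x - a) / 2) := sin_pos_of_pos_of_lt_pi (by linarith) (by linarith)
  have hcos : 0 < cos ((x + a) / 2) := cos_pos_of_mem_Ioo ⟨by linarith, by linarith⟩
  nlinarith [sin_sub_sin x a, mul_pos hsin hcos]

lemma sin_half_pos {x : ℝ} (h₀ : 0 < x) (h₁ : x < 2 * π) : 0 < sin (x / 2) :=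
  sin_pos_of_pos_of_lt_pi (by linarith) (by linarith)

lemma cos_half_pos {x : ℝ} (h₀ : -π < x) (h₁ : x < π) : 0 < cos (x / 2) :=
  cos_pos_of_mem_Ioo ⟨by linarith, by linarith⟩

lemma hasDerivAt_arcsin_cos_half_div {c θ : ℝ} (hc : 0 < c) (h : cos (θ / 2) ^ 2 < c ^ 2) :
    HasDerivAt (fun t => arcsin (cos (t / 2) / c))
      (-sin (θ / 2) / (2 * √(c ^ 2 - cos (θ / 2) ^ 2))) θ := by
  have hf : HasDerivAt (fun t => cos (t / 2) / c) (-sin (θ / 2) * (1 / 2) / c) θ := by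
    simpa using (((hasDerivAt_id θ).div_const 2).cos).div_const c
  have hsq : (cos (θ / 2) / c) ^ 2 < 1 := by
    rwa [div_pow, div_lt_one (by positivity)]
  have hroot : √(1 - (cos (θ / 2) / c) ^ 2) = √(c ^ 2 - cos (θ / 2) ^ 2) / c := by
    rw [show 1 - (cos (θ / 2) / c) ^ 2 = (c ^ 2 - cos (θ / 2) ^ 2) / c ^ 2 by field_simp,
      sqrt_div' _ (sq_nonneg c), sqrt_sq hc.le]
  convert hf.arcsin_of_sq_lt_one hsq using 1
  rw [hroot]
  field_simp

lemma hasDerivAt_arcsin_mul_cos_half_div {s c θ : ℝ} (hs : 0 ≤ s) (hc : 0 < c)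
    (hsc : s ^ 2 + c ^ 2 = 1) (hθ : s < sin (θ / 2)) :
    HasDerivAt (fun t => arcsin (s * cos (t / 2) / (c * sin (t / 2))))
      (-s / (2 * sin (θ / 2) * √(sin (θ / 2) ^ 2 - s ^ 2))) θ := by
  set σ := sin (θ / 2)
  set γ := cos (θ / 2)
  have hσ : 0 < σ := hs.trans_lt hθ
  have hσγ : σ ^ 2 + γ ^ 2 = 1 := sin_sq_add_cos_sq _
  have hQ : 0 < σ ^ 2 - s ^ 2 := by nlinarith
  have hkey : (c * σ) ^ 2 - (s * γ) ^ 2 = σ ^ 2 - s ^ 2 := by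
    linear_combination σ ^ 2 * hsc - s ^ 2 * hσγ
  have hf : HasDerivAt (fun t => s * cos (t / 2) / (c * sin (t / 2)))
      (-s / (2 * c * σ ^ 2)) θ := by
    have hhalf : HasDerivAt (fun t : ℝ => t / 2) (1 / 2) θ := (hasDerivAt_id' θ).div_const 2
    refine ((hhalf.cos.const_mul s).div (hhalf.sin.const_mul c)
      (by positivity)).congr_deriv ?_
    change (s * (-σ * (1 / 2)) * (c * σ) - s * γ * (c * (γ * (1 / 2)))) / (c * σ) ^ 2 = _
    field_simp
    linear_combination (-s) * hσγ
  have hsq : (s * γ / (c * σ)) ^ 2 < 1 := by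
    rw [div_pow, div_lt_one (by positivity)]; linarith
  have hroot : √(1 - (s * γ / (c * σ)) ^ 2) = √(σ ^ 2 - s ^ 2) / (c * σ) := by
    rw [show 1 - (s * γ / (c * σ)) ^ 2 = (σ ^ 2 - s ^ 2) / (c * σ) ^ 2 by field_simp; linarith,
      sqrt_div' _ (sq_nonneg _), sqrt_sq (by positivity)]
  convert hf.arcsin_of_sq_lt_one hsq using 1
  rw [hroot]
  field_simp

noncomputable def hpPrimitive (θd θ : ℝ) : ℝ :=
  2 * sin (θd / 2) * arcsin (sin (θd / 2) * cos (θ / 2) / (cos (θd / 2) * sin (θ / 2)))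
    - 2 * arcsin (cos (θ / 2) / cos (θd / 2))

lemma hasDerivAt_hpPrimitive {θd θ : ℝ} (hθd : 0 ≤ θd) (hθ : θ ∈ Ioo θd (2 * π - θd)) :
    HasDerivAt (hpPrimitive θd)
      (√(sin (θ / 2) ^ 2 - sin (θd / 2) ^ 2) / sin (θ / 2)) θ := by
  obtain ⟨hθ₁, hθ₂⟩ := hθ
  set s := sin (θd / 2)
  set c := cos (θd / 2)
  have hs : 0 ≤ s := sin_nonneg_of_nonneg_of_le_pi (by linarith) (by linarith)
  have hc : 0 < c := cos_half_pos (by linarith [pi_pos]) (by linarith)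
  have hsθ : s < sin (θ / 2) :=
    sin_lt_sin_of_lt_of_lt_pi_sub (by linarith) (by linarith) (by linarith)
  have hpyth : c ^ 2 - cos (θ / 2) ^ 2 = sin (θ / 2) ^ 2 - s ^ 2 := by
    linear_combination sin_sq_add_cos_sq (θd / 2) - sin_sq_add_cos_sq (θ / 2)
  have hQ : 0 < sin (θ / 2) ^ 2 - s ^ 2 := by nlinarith
  have hA := hasDerivAt_arcsin_cos_half_div (θ := θ) hc (by linarith)
  have hB := hasDerivAt_arcsin_mul_cos_half_div hs hc (sin_sq_add_cos_sq _) hsθ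
  refine ((hB.const_mul (2 * s)).sub (hA.const_mul 2)).congr_deriv ?_
  rw [hpyth]
  field_simp
  rw [sq_sqrt hQ.le]
  ring

lemma sin_half_pos_of_mem_Icc {θd θ : ℝ} (hθd : 0 < θd) (hθ : θ ∈ Icc θd (2 * π - θd)) :
    0 < sin (θ / 2) :=
  (sin_half_pos hθd (by linarith [hθ.1, hθ.2, pi_pos])).trans_le
    (sin_le_sin_of_le_of_le_pi_sub (by linarith) (by linarith [hθ.1]) (by linarith [hθ.2]))

lemma continuousOn_hpPrimitive {θd : ℝ} (hθd : θd ∈ Ioo 0 π) :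
    ContinuousOn (hpPrimitive θd) (Icc θd (2 * π - θd)) := by
  have hc : cos (θd / 2) ≠ 0 := (cos_half_pos (by linarith [hθd.1, pi_pos]) hθd.2).ne'
  refine ContinuousOn.sub (continuousOn_const.mul (continuous_arcsin.comp_continuousOn ?_))
    (by fun_prop)
  exact ContinuousOn.div (by fun_prop) (by fun_prop)
    fun θ hθ => mul_ne_zero hc (sin_half_pos_of_mem_Icc hθd.1 hθ).ne'

lemma hpPrimitive_left {θd : ℝ} (hθd : θd ∈ Ioo 0 π) :
    hpPrimitive θd θd = π * sin (θd / 2) - π := by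
  have hs : sin (θd / 2) ≠ 0 := (sin_half_pos hθd.1 (by linarith [hθd.2, pi_pos])).ne'
  have hc : cos (θd / 2) ≠ 0 := (cos_half_pos (by linarith [hθd.1, pi_pos]) hθd.2).ne'
  rw [hpPrimitive, mul_comm (cos _), div_self (mul_ne_zero hs hc), div_self hc, arcsin_one]
  ring

lemma hpPrimitive_right {θd : ℝ} (hθd : θd ∈ Ioo 0 π) :
    hpPrimitive θd (2 * π - θd) = π - π * sin (θd / 2) := by
  have hs : sin (θd / 2) ≠ 0 := (sin_half_pos hθd.1 (by linarith [hθd.2, pi_pos])).ne'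
  have hc : cos (θd / 2) ≠ 0 := (cos_half_pos (by linarith [hθd.1, pi_pos]) hθd.2).ne'
  have h : (2 * π - θd) / 2 = π - θd / 2 := by ring
  rw [hpPrimitive, h, sin_pi_sub, cos_pi_sub, mul_neg, mul_comm (cos _), neg_div,
    div_self (mul_ne_zero hs hc), neg_div, div_self hc, arcsin_neg, arcsin_one]
  ring

theorem integral_sqrt_sin_sq_sub_div_sin {θd : ℝ} (hθd : θd ∈ Ioo 0 π) :
    ∫ θ in θd..(2 * π - θd), √(sin (θ / 2) ^ 2 - sin (θd / 2) ^ 2) / sin (θ / 2)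
      = 2 * π * (1 - sin (θd / 2)) := by
  have hle : θd ≤ 2 * π - θd := by linarith [hθd.2]
  have hint : IntervalIntegrable (fun θ => √(sin (θ / 2) ^ 2 - sin (θd / 2) ^ 2) / sin (θ / 2))
      MeasureTheory.volume θd (2 * π - θd) :=
    (ContinuousOn.div (by fun_prop) (by fun_prop) fun θ hθ =>
      (sin_half_pos_of_mem_Icc hθd.1 hθ).ne').intervalIntegrable_of_Icc hle
  rw [integral_eq_sub_of_hasDerivAt_of_le hle (continuousOn_hpPrimitive hθd)
    (fun θ hθ => hasDerivAt_hpPrimitive hθd.1.le hθ) hint,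
    hpPrimitive_left hθd, hpPrimitive_right hθd]
  ring

theorem HP_equilibrium_is_probability (d : ℝ) (hd : 0 < d)
    (θd : ℝ) (hθd : θd ∈ Set.Ioo (0 : ℝ) Real.pi)
    (hsin : Real.sin (θd / 2) = d / (1 + d)) :
    ∫ θ in θd..(2 * Real.pi - θd),
        (1 + d) * Real.sqrt (Real.sin (θ / 2) ^ 2 - Real.sin (θd / 2) ^ 2)
          / (2 * Real.pi * Real.sin (θ / 2)) = 1 := by
  have hd₁ : 1 + d ≠ 0 := by positivity
  simp_rw [mul_div_mul_comm]
  rw [integral_const_mul, integral_sqrt_sin_sq_sub_div_sin hθd, hsin]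
  field_simp
  ring
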